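/- Let M be a piecewise-consistent, relation-preserving memory model, P ↦_tr P' a transformation-effect with no eliminations (st⁻ = ∅), and E ∈ I⟨P⟩_M, E' ∈ I⟨P'⟩_M with E ∼ E'. If E' has a minimal crucial set but E has no crucial set, then tr is unsafe under M. -/
import Mathlib


/-- A pre-trace: a set of events with a program order. -/
structure PreTrace (Event : Type) where
  events : Set Event
  po : Event → Event → Prop

/-- An execution: a pre-trace augmented with reads-from and memory order. -/
structure Execution (Event : Type) where
  pt : PreTrace Event
  rf : Event → Event → Prop
  mo : Event → Event → Prop

/-- Well-formedness: every read of the pre-trace has an incoming rf edge. -/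
def wfE {Event : Type} (isRead : Event → Prop) (E : Execution Event) : Prop :=
  ∀ r, r ∈ E.pt.events → isRead r → ∃ w, E.rf w r

/-- `rf⁻¹` is functional. -/
def rfFun {Event : Type} (E : Execution Event) : Prop :=
  ∀ w w' r, E.rf w r → E.rf w' r → w = w'

/-- rf relates writes to reads of the same location, among the events. -/
def rfWF {Event Loc : Type} (isRead isWrite : Event → Prop) (loc : Event → Loc)
    (E : Execution Event) : Prop :=
  ∀ w r, E.rf w r →
    w ∈ E.pt.events ∧ r ∈ E.pt.events ∧ isWrite w ∧ isRead r ∧ loc w = loc r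

/-- mo is a strict total order on the writes of the pre-trace. -/
def moStrictTotal {Event : Type} (isWrite : Event → Prop) (E : Execution Event) : Prop :=
  Transitive E.mo ∧ Irreflexive E.mo ∧
  (∀ a b, E.mo a b → a ∈ E.pt.events ∧ b ∈ E.pt.events ∧ isWrite a ∧ isWrite b) ∧
  (∀ a b, a ∈ E.pt.events → b ∈ E.pt.events → isWrite a → isWrite b →
    a ≠ b → E.mo a b ∨ E.mo b a)

/-- Every location written has a maximal write in mo. -/
def maxWrite {Event Loc : Type} (isWrite : Event → Prop) (loc : Event → Loc)
    (E : Execution Event) : Prop :=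
  ∀ l : Loc, (∃ w ∈ E.pt.events, isWrite w ∧ loc w = l) →
    ∃ w ∈ E.pt.events, isWrite w ∧ loc w = l ∧
      ∀ w' ∈ E.pt.events, isWrite w' → loc w' = l → w' ≠ w → E.mo w' w

/-- Candidate execution. -/
def candidate {Event Loc : Type} (isRead isWrite : Event → Prop) (loc : Event → Loc)
    (E : Execution Event) : Prop :=
  wfE isRead E ∧ rfFun E ∧ rfWF isRead isWrite loc E ∧
    moStrictTotal isWrite E ∧ maxWrite isWrite loc E

/-- Consistency under a memory model, i.e. a set of consistency rules. -/
def consistent {Event : Type} (M : Set (Execution Event → Prop))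
    (E : Execution Event) : Prop :=
  ∀ a ∈ M, a E

/-- `cr` is a crucial set of reads for `E` under `M`: removing the incoming
rf edges of reads in `cr` (keeping the pre-trace and mo) yields an
`M`-consistent execution. -/
def crucialSet {Event : Type} (M : Set (Execution Event → Prop))
    (isRead : Event → Prop) (E : Execution Event) (cr : Set Event) : Prop :=
  (∀ r ∈ cr, r ∈ E.pt.events ∧ isRead r) ∧
  consistent M (Execution.mk E.pt (fun w r => E.rf w r ∧ r ∉ cr) E.mo)

/-- A nonempty crucial set is minimal if no proper subset is crucial. -/
def minimalCrucial {Event : Type} (M : Set (Execution Event → Prop))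
    (isRead : Event → Prop) (E : Execution Event) (cr : Set Event) : Prop :=
  cr.Nonempty ∧ crucialSet M isRead E cr ∧
    ∀ cr' : Set Event, cr' ⊂ cr → ¬ crucialSet M isRead E cr'

/-- Piecewise consistency: every `M`-consistent non-well-formed execution
satisfying the candidate side conditions extends (same pre-trace and mo,
strictly larger rf) to an `M`-consistent candidate execution. -/
def piecewiseConsistent {Event Loc : Type} (isRead isWrite : Event → Prop)
    (loc : Event → Loc) (M : Set (Execution Event → Prop)) : Prop :=
  ∀ E : Execution Event, ¬ wfE isRead E → consistent M E → rfFun E →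
    moStrictTotal isWrite E → maxWrite isWrite loc E →
    ∃ Et : Execution Event, candidate isRead isWrite loc Et ∧ consistent M Et ∧
      Et.pt = E.pt ∧ Et.mo = E.mo ∧
      (∀ a b, E.rf a b → Et.rf a b) ∧ (∃ a b, Et.rf a b ∧ ¬ E.rf a b)

/-- Relation preservation: the rules of `M` are monotone in rf and mo for a
fixed pre-trace (inconsistency is preserved on enlarging rf and mo). -/
def relationPreserving {Event : Type} (M : Set (Execution Event → Prop)) : Prop :=
  ∀ a ∈ M, ∀ E E' : Execution Event, E.pt = E'.pt →
    (∀ x y, E.rf x y → E'.rf x y) → (∀ x y, E.mo x y → E'.mo x y) →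
    ¬ a E → ¬ a E'

/-- Comparability of two executions: common reads have the same rf edges and
common writes have the same mo. -/
def cmpExec {Event : Type} (isRead isWrite : Event → Prop)
    (E E' : Execution Event) : Prop :=
  (∀ r, r ∈ E.pt.events → r ∈ E'.pt.events → isRead r →
    ∀ w, E.rf w r ↔ E'.rf w r) ∧
  (∀ a b, a ∈ E.pt.events → a ∈ E'.pt.events → b ∈ E.pt.events →
    b ∈ E'.pt.events → isWrite a → isWrite b → (E.mo a b ↔ E'.mo a b))

/-- Safety of the transformation-effect `P ↦ P'` under model `M`:
every `M`-consistent candidate execution of `P'` has a comparable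
`M`-consistent candidate execution of `P`. -/
def safeEffect {Event Loc : Type} (isRead isWrite : Event → Prop)
    (loc : Event → Loc) (M : Set (Execution Event → Prop))
    (P P' : PreTrace Event) : Prop :=
  ∀ E' : Execution Event, E'.pt = P' → candidate isRead isWrite loc E' →
    consistent M E' →
    ∃ E : Execution Event, E.pt = P ∧ candidate isRead isWrite loc E ∧
      consistent M E ∧ cmpExec isRead isWrite E E'

/-- Lemma (crucial-based unsafety, first case): for a piecewise-consistent,
relation-preserving model `M`, a transformation-effect `P ↦ P'` with no
eliminations, and comparable inconsistent candidate executions `E` of `P` and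
`E'` of `P'`, if `E'` has a minimal crucial set but `E` has no crucial set,
then the effect is unsafe under `M`. -/
theorem unsafe_of_no_crucial_set {Event Loc : Type}
    (isRead isWrite : Event → Prop) (loc : Event → Loc)
    (M : Set (Execution Event → Prop))
    (hpwc : piecewiseConsistent isRead isWrite loc M)
    (hrel : relationPreserving M)
    (P P' : PreTrace Event) (stPlus : Set Event)
    (hevents : P'.events = P.events ∪ stPlus)
    (E E' : Execution Event) (hEpt : E.pt = P) (hE'pt : E'.pt = P')
    (hEcand : candidate isRead isWrite loc E)
    (hE'cand : candidate isRead isWrite loc E')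
    (hEinc : ¬ consistent M E) (hE'inc : ¬ consistent M E')
    (hsim : cmpExec isRead isWrite E E')
    (hcr' : ∃ cr' : Set Event, minimalCrucial M isRead E' cr')
    (hnocr : ¬ ∃ cr : Set Event, cr.Nonempty ∧ crucialSet M isRead E cr) :
    ¬ safeEffect isRead isWrite loc M P P' := by
  intro hsafe
  obtain ⟨cr', ⟨⟨r0, hr0⟩, hcru, -⟩⟩ := hcr'
  obtain ⟨hcrmem, hcons''⟩ := hcru
  -- the execution E' with rf edges into cr' removed
  set E'' : Execution Event :=
    Execution.mk E'.pt (fun w r => E'.rf w r ∧ r ∉ cr') E'.mo with hE''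
  have hE''nwf : ¬ wfE isRead E'' := by
    intro h
    obtain ⟨w, hw⟩ := h r0 (hcrmem r0 hr0).1 (hcrmem r0 hr0).2
    exact hw.2 hr0
  have hE''fun : rfFun E'' := by
    intro w w' r h1 h2
    exact hE'cand.2.1 w w' r h1.1 h2.1
  obtain ⟨Et, hEtcand, hEtcons, hEtpt, hEtmo, hEtrf, -⟩ :=
    hpwc E'' hE''nwf hcons'' hE''fun hE'cand.2.2.2.1 hE'cand.2.2.2.2
  have hEtpt' : Et.pt = P' := by rw [hEtpt]; exact hE'pt
  obtain ⟨F, hFpt, hFcand, hFcons, hFsim⟩ := hsafe Et hEtpt' hEtcand hEtcons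
  -- Key fact A: Et.rf agrees with E'.rf on reads outside cr'
  have keyA : ∀ w r, r ∉ cr' → (Et.rf w r ↔ E'.rf w r) := by
    intro w r hnot
    constructor
    · intro h
      obtain ⟨hwmem, hrmem, hwW, hrR, -⟩ := hEtcand.2.2.1 w r h
      rw [hEtpt] at hrmem
      obtain ⟨w0, hw0⟩ := hE'cand.1 r hrmem hrR
      have h0 : Et.rf w0 r := hEtrf w0 r ⟨hw0, hnot⟩
      rw [hEtcand.2.1 w w0 r h h0]
      exact hw0
    · intro h
      exact hEtrf w r ⟨h, hnot⟩
  -- Key fact B: F.rf agrees with E.rf on reads of P outside cr'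
  have keyB : ∀ w r, r ∈ P.events → isRead r → r ∉ cr' →
      (E.rf w r ↔ F.rf w r) := by
    intro w r hrP hrR hnot
    have hrP' : r ∈ P'.events := by rw [hevents]; exact Or.inl hrP
    have h1 : E.rf w r ↔ E'.rf w r :=
      hsim.1 r (by rw [hEpt]; exact hrP) (by rw [hE'pt]; exact hrP') hrR w
    have h2 : F.rf w r ↔ Et.rf w r :=
      hFsim.1 r (by rw [hFpt]; exact hrP) (by rw [hEtpt']; exact hrP') hrR w
    rw [h1, h2, keyA w r hnot]
  -- Key fact C: F.mo agrees with E.mo everywhere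
  have moMem : ∀ a b, a ∈ P.events → b ∈ P.events → isWrite a → isWrite b →
      (E.mo a b ↔ F.mo a b) := by
    intro a b haP hbP haW hbW
    have haP' : a ∈ P'.events := by rw [hevents]; exact Or.inl haP
    have hbP' : b ∈ P'.events := by rw [hevents]; exact Or.inl hbP
    have h1 : E.mo a b ↔ E'.mo a b :=
      hsim.2 a b (by rw [hEpt]; exact haP) (by rw [hE'pt]; exact haP')
        (by rw [hEpt]; exact hbP) (by rw [hE'pt]; exact hbP') haW hbW
    have h2 : F.mo a b ↔ Et.mo a b :=
      hFsim.2 a b (by rw [hFpt]; exact haP) (by rw [hEtpt']; exact haP')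
        (by rw [hFpt]; exact hbP) (by rw [hEtpt']; exact hbP') haW hbW
    have h3 : Et.mo = E'.mo := hEtmo
    rw [h1, h2, h3]
  have keyC : ∀ a b, E.mo a b → F.mo a b := by
    intro a b h
    obtain ⟨haE, hbE, haW, hbW⟩ := hEcand.2.2.2.1.2.2.1 a b h
    rw [hEpt] at haE hbE
    exact (moMem a b haE hbE haW hbW).1 h
  -- the candidate crucial set for E
  set cr : Set Event := {r | r ∈ cr' ∧ r ∈ P.events} with hcr
  rcases Set.eq_empty_or_nonempty cr with hemp | hne
  · -- cr empty: F agrees with E entirely, so E would be consistent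
    apply hEinc
    intro a ha
    by_contra hnot
    refine hrel a ha E F (hEpt.trans hFpt.symm) ?_ keyC hnot (hFcons a ha)
    intro w r h
    obtain ⟨-, hrmem, -, hrR, -⟩ := hEcand.2.2.1 w r h
    rw [hEpt] at hrmem
    have hncr' : r ∉ cr' := by
      intro hmem
      have : r ∈ cr := ⟨hmem, hrmem⟩
      rw [hemp] at this
      exact this
    exact (keyB w r hrmem hrR hncr').1 h
  · -- cr nonempty: cr is a crucial set of E
    apply hnocr
    refine ⟨cr, hne, ?_, ?_⟩
    · intro r hrcr
      exact ⟨by rw [hEpt]; exact hrcr.2, (hcrmem r hrcr.1).2⟩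
    · intro a ha
      by_contra hnot
      refine hrel a ha
        (Execution.mk E.pt (fun w r => E.rf w r ∧ r ∉ cr) E.mo) F
        (hEpt.trans hFpt.symm) ?_ keyC hnot (hFcons a ha)
      intro w r h
      obtain ⟨hrf, hrncr⟩ := h
      obtain ⟨-, hrmem, -, hrR, -⟩ := hEcand.2.2.1 w r hrf
      rw [hEpt] at hrmem
      have hncr' : r ∉ cr' := fun hmem => hrncr ⟨hmem, hrmem⟩
      exact (keyB w r hrmem hrR hncr').1 hrf
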